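/- arXiv:2604.25925 — 4 statements merged into one kernel-verified Lean document; each statement's English description precedes it below -/
import Mathlib

section
/- Upper bound on expected acceptance length (Lemma 5.1): For every conditionally i.i.d. coupling π of p^⊗K and q, the expected acceptance length satisfies E_{(X_1,…,X_K,Y)∼π}[τ(X_1,…,X_K,Y)] ≤ Bound(K) = Σ_{i=1}^{L} Σ_{x^i ∈ Ω^i} q(x^i)·[1 − (1 − min{p(x^i)/q(x^i), 1})^K]. -/
attribute [local instance] Classical.propDecidable

noncomputable section

/-- `s ∈ Ω^L` has the length-`i` prefix `x ∈ Ω^i`. -/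
def HasPref {Ω : Type*} {L i : ℕ} (s : Fin L → Ω) (x : Fin i → Ω) : Prop :=
  ∀ j : Fin L, ∀ hj : (j : ℕ) < i, s j = x ⟨(j : ℕ), hj⟩

/-- Mass of the length-`i` prefix `x` under the block distribution `p` on `Ω^L`. -/
def prefProb {Ω : Type*} [Fintype Ω] {L i : ℕ} (p : (Fin L → Ω) → ℝ) (x : Fin i → Ω) : ℝ :=
  ∑ s : Fin L → Ω, if HasPref s x then p s else 0

/-- `Bound(K) = Σ_{i=1}^{L} Σ_{x^i ∈ Ω^i} q(x^i)·[1 − (1 − min{p(x^i)/q(x^i), 1})^K]`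
(the summand with `q(x^i) = 0` is automatically `0`). -/
def Bound {Ω : Type*} [Fintype Ω] {L : ℕ} (p q : (Fin L → Ω) → ℝ) (K : ℕ) : ℝ :=
  ∑ i ∈ Finset.range L, ∑ x : Fin (i + 1) → Ω,
    prefProb q x * (1 - (1 - min (prefProb p x / prefProb q x) 1) ^ K)

/-- `π` is a coupling of `p^{⊗K}` and `q`: a pmf on `(Ω^L)^K × Ω^L` whose
`(X_1, …, X_K)`-marginal is the `K`-fold product of `p` and whose `Y`-marginal is `q`. -/
def IsCoupling {Ω : Type*} [Fintype Ω] {L K : ℕ} (p q : (Fin L → Ω) → ℝ)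
    (π : (Fin K → Fin L → Ω) × (Fin L → Ω) → ℝ) : Prop :=
  (∀ z, 0 ≤ π z) ∧
  (∀ X : Fin K → Fin L → Ω, ∑ y : Fin L → Ω, π (X, y) = ∏ k : Fin K, p (X k)) ∧
  (∀ y : Fin L → Ω, ∑ X : Fin K → Fin L → Ω, π (X, y) = q y)

/-- `π` is a conditionally i.i.d. coupling of `p^{⊗K}` and `q`: there is a kernel `κ`
from `Ω^L` to pmfs on `Ω^L` with `π(x_1, …, x_K, y) = q(y)·Π_k κ(y)(x_k)`. -/
def IsCondIIDCoupling {Ω : Type*} [Fintype Ω] {L K : ℕ} (p q : (Fin L → Ω) → ℝ)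
    (π : (Fin K → Fin L → Ω) × (Fin L → Ω) → ℝ) : Prop :=
  IsCoupling p q π ∧
  ∃ κ : (Fin L → Ω) → (Fin L → Ω) → ℝ,
    (∀ y x, 0 ≤ κ y x) ∧ (∀ y, ∑ x : Fin L → Ω, κ y x = 1) ∧
    (∀ X : Fin K → Fin L → Ω, ∀ y : Fin L → Ω, π (X, y) = q y * ∏ k : Fin K, κ y (X k))

/-- Acceptance length `τ(x_1, …, x_K, y)`: the largest `i ∈ {0, …, L}` such that
some draft `x_k` agrees with `y` on the first `i` coordinates. -/
def accLen {Ω : Type*} {L K : ℕ} (X : Fin K → Fin L → Ω) (y : Fin L → Ω) : ℕ :=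
  ((Finset.range (L + 1)).filter
    (fun i => ∃ k : Fin K, ∀ j : Fin L, (j : ℕ) < i → X k j = y j)).sup id

/-!
Write `τ` as the sum of its tail indicators `[i < τ]`, `i < L`. Given `Y = y`, the drafts are
i.i.d. with law `κ y`, so the event `i < τ` has probability `1 - (1 - κ_y(x))^K`, where `x` is
the length-`(i + 1)` prefix of `y` and `κ_y(x)` its mass under `κ y`. The map
`t ↦ 1 - (1 - t)^K` is concave and nondecreasing on `[0, 1]`, and averaging the `X₁`-marginal
over `Y` gives `∑_y q(y) κ_y(x) = p(x)`; hence, over the `y` with prefix `x`, the `q`-weighted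
average of `κ_y(x)` is at most `min (p(x) / q(x)) 1`, and the tangent line of the concave map at
that point bounds the level-`i` term by the corresponding summand of `Bound`.
-/

open Finset

lemma natCast_eq_sum_range_ite_lt {n m : ℕ} (h : n ≤ m) :
    (n : ℝ) = ∑ i ∈ range m, if i < n then (1 : ℝ) else 0 := by
  rw [sum_boole, range_eq_Ico, Ico_filter_lt, min_eq_right h, Nat.card_Ico, Nat.sub_zero]

lemma mul_pow_pred_mul_sub_le_pow_sub_pow {u v : ℝ} (hu : 0 ≤ u) (hv : 0 ≤ v) (n : ℕ) :
    n * v ^ (n - 1) * (u - v) ≤ u ^ n - v ^ n := by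
  rcases n with _ | n
  · simp
  induction n with
  | zero => simp
  | succ n ih =>
    push_cast at ih ⊢
    simp only [pow_succ] at ih ⊢
    -- `u` times the bound at `n + 1` falls short of the bound at `n + 2` by `(n+1) v^n (u-v)^2`.
    have hgap : 0 ≤ (n + 1) * v ^ n * (u - v) ^ 2 := by positivity
    nlinarith [mul_le_mul_of_nonneg_left ih hu]

lemma sum_mul_one_sub_one_sub_pow_le {ι : Type*} (s : Finset ι) {w T : ι → ℝ}
    (hw : ∀ i ∈ s, 0 ≤ w i) (hT0 : ∀ i ∈ s, 0 ≤ T i) (hT1 : ∀ i ∈ s, T i ≤ 1) {P : ℝ}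
    (hP : ∑ i ∈ s, w i * T i ≤ P) (K : ℕ) :
    ∑ i ∈ s, w i * (1 - (1 - T i) ^ K)
      ≤ (∑ i ∈ s, w i) * (1 - (1 - min (P / ∑ i ∈ s, w i) 1) ^ K) := by
  set W := ∑ i ∈ s, w i
  set c := min (P / W) 1
  have hW : 0 ≤ W := sum_nonneg hw
  have hwT_le_W : ∑ i ∈ s, w i * T i ≤ W :=
    sum_le_sum fun i hi => mul_le_of_le_one_right (hw i hi) (hT1 i hi)
  have hwT_nonneg : 0 ≤ ∑ i ∈ s, w i * T i :=
    sum_nonneg fun i hi => mul_nonneg (hw i hi) (hT0 i hi)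
  have hc0 : 0 ≤ c := le_min (div_nonneg (hwT_nonneg.trans hP) hW) zero_le_one
  have hc1 : c ≤ 1 := min_le_right _ _
  -- If `W = 0` then `c = 0` (as `P / 0 = 0`), and all weights vanish.
  have hwT_le_cW : ∑ i ∈ s, w i * T i ≤ c * W := by
    rcases hW.eq_or_lt with hW0 | hWpos
    · simpa [← hW0] using hwT_le_W
    · rw [min_mul_of_nonneg _ _ hW, div_mul_cancel₀ _ hWpos.ne', one_mul]
      exact le_min hP hwT_le_W
  set D := K * (1 - c) ^ (K - 1)
  have hD : 0 ≤ D := by positivity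
  have tangent : ∀ i ∈ s, 1 - (1 - T i) ^ K ≤ 1 - (1 - c) ^ K + D * (T i - c) := fun i hi => by
    have := mul_pow_pred_mul_sub_le_pow_sub_pow (sub_nonneg.2 (hT1 i hi)) (sub_nonneg.2 hc1) K
    linarith
  calc ∑ i ∈ s, w i * (1 - (1 - T i) ^ K)
      ≤ ∑ i ∈ s, w i * (1 - (1 - c) ^ K + D * (T i - c)) :=
        sum_le_sum fun i hi => mul_le_mul_of_nonneg_left (tangent i hi) (hw i hi)
    _ = W * (1 - (1 - c) ^ K) + D * (∑ i ∈ s, w i * T i - c * W) := by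
        have expand : ∀ i, w i * (1 - (1 - c) ^ K + D * (T i - c))
            = (1 - (1 - c) ^ K) * w i + D * (w i * T i) - D * c * w i := fun i => by ring
        simp only [expand, sum_sub_distrib, sum_add_distrib, ← mul_sum, W]
        ring
    _ ≤ W * (1 - (1 - c) ^ K) :=
        add_le_of_nonpos_right (mul_nonpos_of_nonneg_of_nonpos hD (sub_nonpos.2 hwT_le_cW))

section ProductPMF

variable {α ι : Type*} [Fintype α] [Fintype ι] {g : α → ℝ}

lemma sum_prod_mul_ite_apply [DecidableEq ι] (k₀ : ι) (hg : ∑ a, g a = 1)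
    (P : α → Prop) [DecidablePred P] :
    ∑ X : ι → α, (∏ k, g (X k)) * (if P (X k₀) then 1 else 0) = ∑ a, if P a then g a else 0 := by
  set h : ι → α → ℝ := fun k a => if k = k₀ then (if P a then g a else 0) else g a
  have hprod : ∀ X : ι → α, (∏ k, g (X k)) * (if P (X k₀) then 1 else 0) = ∏ k, h k (X k) := by
    intro X
    rw [← mul_prod_erase univ _ (mem_univ k₀), ← mul_prod_erase univ _ (mem_univ k₀),
      prod_congr rfl fun k hk => if_neg (ne_of_mem_erase hk)]
    by_cases hP : P (X k₀) <;> simp [h, hP]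
  rw [sum_congr rfl fun X _ => hprod X, ← Fintype.prod_sum]
  have hsum : ∀ k, ∑ a, h k a = if k = k₀ then ∑ a, if P a then g a else 0 else 1 := by
    intro k
    by_cases hk : k = k₀ <;> simp [h, hk, hg]
  simp [hsum]

lemma sum_prod_mul_ite_exists {K : ℕ} (hg : ∑ a, g a = 1) (P : α → Prop) [DecidablePred P] :
    ∑ X : Fin K → α, (∏ k, g (X k)) * (if ∃ k, P (X k) then 1 else 0)
      = 1 - (1 - ∑ a, if P a then g a else 0) ^ K := by
  have hind : ∀ X : Fin K → α,
      (if ∃ k, P (X k) then (1 : ℝ) else 0) = 1 - ∏ k, (if P (X k) then 0 else 1) := by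
    intro X
    by_cases hX : ∃ k, P (X k)
    · obtain ⟨k, hk⟩ := hX
      rw [if_pos ⟨k, hk⟩, Finset.prod_eq_zero (f := fun k => if P (X k) then (0 : ℝ) else 1)
        (mem_univ k) (if_pos hk), sub_zero]
    · rw [if_neg hX, prod_eq_one fun k _ => if_neg fun hk => hX ⟨k, hk⟩, sub_self]
  have hmiss : ∑ a, g a * (if P a then 0 else 1) = 1 - ∑ a, if P a then g a else 0 := by
    have hsplit : ∀ a, g a * (if P a then 0 else 1) = g a - if P a then g a else 0 := by
      intro a; split_ifs <;> ring
    simp only [hsplit, sum_sub_distrib, hg]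
  simp_rw [hind, mul_sub, mul_one, ← prod_mul_distrib, sum_sub_distrib]
  rw [← Fintype.sum_pow, ← Fintype.sum_pow (fun a => g a * if P a then 0 else 1), hg, one_pow,
    hmiss]

end ProductPMF

section Prefixes

variable {Ω : Type*} {L K : ℕ}

lemma accLen_le (X : Fin K → Fin L → Ω) (y : Fin L → Ω) : accLen X y ≤ L :=
  Finset.sup_le fun _ hi => Nat.lt_succ_iff.1 (mem_range.1 (mem_filter.1 hi).1)

lemma lt_accLen_iff {i : ℕ} (hi : i < L) (X : Fin K → Fin L → Ω) (y : Fin L → Ω) :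
    i < accLen X y ↔ ∃ k, HasPref (X k) (y ∘ Fin.castLE hi) := by
  rw [accLen, Finset.lt_sup_iff]
  constructor
  · rintro ⟨b, hb, hib⟩
    obtain ⟨k, hk⟩ := (mem_filter.1 hb).2
    exact ⟨k, fun j hj => hk j (by simp only [id] at hib; omega)⟩
  · rintro ⟨k, hk⟩
    exact ⟨i + 1, mem_filter.2 ⟨mem_range.2 (by omega), k, fun j hj => hk j hj⟩, i.lt_succ_self⟩

lemma hasPref_iff_comp_castLE {i : ℕ} (h : i ≤ L) (s : Fin L → Ω) (x : Fin i → Ω) :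
    HasPref s x ↔ s ∘ Fin.castLE h = x := by
  constructor
  · intro hs
    funext m
    exact hs _ m.isLt
  · rintro rfl j hj
    rfl

variable [Fintype Ω]

lemma prefProb_eq_sum_filter {i : ℕ} (h : i ≤ L) (p : (Fin L → Ω) → ℝ) (x : Fin i → Ω) :
    prefProb p x = ∑ s with s ∘ Fin.castLE h = x, p s := by
  rw [prefProb, sum_filter]
  exact sum_congr rfl fun s _ => if_congr (hasPref_iff_comp_castLE h s x) rfl rfl

lemma prefProb_nonneg {i : ℕ} {p : (Fin L → Ω) → ℝ} (hp : ∀ s, 0 ≤ p s) (x : Fin i → Ω) :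
    0 ≤ prefProb p x :=
  sum_nonneg fun s _ => by split_ifs <;> simp [hp s]

lemma prefProb_le_one {i : ℕ} {p : (Fin L → Ω) → ℝ} (hp : ∀ s, 0 ≤ p s)
    (hp1 : ∑ s, p s = 1) (x : Fin i → Ω) : prefProb p x ≤ 1 :=
  hp1 ▸ sum_le_sum fun s _ => by split_ifs <;> simp [hp s]

end Prefixes

section CondIIDCoupling

variable {Ω : Type*} [Fintype Ω] {L K : ℕ} {p q : (Fin L → Ω) → ℝ}
  {π : (Fin K → Fin L → Ω) × (Fin L → Ω) → ℝ} {κ : (Fin L → Ω) → (Fin L → Ω) → ℝ}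

lemma sum_mul_prefProb_kernel_eq_prefProb (hK : 1 ≤ K) (hp1 : ∑ s, p s = 1)
    (hmargX : ∀ X, ∑ y, π (X, y) = ∏ k, p (X k)) (hκ1 : ∀ y, ∑ s, κ y s = 1)
    (hrep : ∀ X y, π (X, y) = q y * ∏ k, κ y (X k)) {i : ℕ} (x : Fin i → Ω) :
    ∑ y, q y * prefProb (κ y) x = prefProb p x := by
  let k₀ : Fin K := ⟨0, hK⟩
  calc ∑ y, q y * prefProb (κ y) x
      = ∑ y, ∑ X : Fin K → Fin L → Ω, π (X, y) * (if HasPref (X k₀) x then 1 else 0) := by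
        refine sum_congr rfl fun y _ => ?_
        simp only [hrep, mul_assoc, ← mul_sum]
        rw [sum_prod_mul_ite_apply k₀ (hκ1 y) (HasPref · x)]
        rfl
    _ = ∑ X : Fin K → Fin L → Ω, (∏ k, p (X k)) * (if HasPref (X k₀) x then 1 else 0) := by
        rw [sum_comm]
        simp only [← sum_mul, hmargX]
    _ = prefProb p x := sum_prod_mul_ite_apply k₀ hp1 (HasPref · x)

lemma sum_mul_ite_lt_accLen_eq {i : ℕ} (hi : i < L) (hκ1 : ∀ y, ∑ s, κ y s = 1)
    (hrep : ∀ X y, π (X, y) = q y * ∏ k, κ y (X k)) :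
    ∑ z, π z * (if i < accLen z.1 z.2 then 1 else 0)
      = ∑ y, q y * (1 - (1 - prefProb (κ y) (y ∘ Fin.castLE hi)) ^ K) := by
  rw [Fintype.sum_prod_type, sum_comm]
  refine sum_congr rfl fun y _ => ?_
  simp only [lt_accLen_iff hi, hrep, mul_assoc, ← mul_sum]
  rw [sum_prod_mul_ite_exists (hκ1 y) (HasPref · (y ∘ Fin.castLE hi))]
  rfl

lemma sum_mul_accLen_eq_sum_range :
    ∑ z, π z * (accLen z.1 z.2 : ℝ)
      = ∑ i ∈ range L, ∑ z, π z * (if i < accLen z.1 z.2 then 1 else 0) := by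
  simp_rw [natCast_eq_sum_range_ite_lt (accLen_le _ _), mul_sum]
  exact sum_comm

lemma sum_mul_one_sub_one_sub_prefProb_pow_le {i : ℕ} (hi : i < L) (hq0 : ∀ s, 0 ≤ q s)
    (hκ0 : ∀ y s, 0 ≤ κ y s) (hκ1 : ∀ y, ∑ s, κ y s = 1)
    (hmix : ∀ x : Fin (i + 1) → Ω, ∑ y, q y * prefProb (κ y) x = prefProb p x) :
    ∑ y, q y * (1 - (1 - prefProb (κ y) (y ∘ Fin.castLE hi)) ^ K)
      ≤ ∑ x : Fin (i + 1) → Ω,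
          prefProb q x * (1 - (1 - min (prefProb p x / prefProb q x) 1) ^ K) := by
  rw [← sum_fiberwise univ (· ∘ Fin.castLE hi)]
  refine sum_le_sum fun x _ => ?_
  have hfiber : ∑ y with y ∘ Fin.castLE hi = x,
        q y * (1 - (1 - prefProb (κ y) (y ∘ Fin.castLE hi)) ^ K)
      = ∑ y with y ∘ Fin.castLE hi = x, q y * (1 - (1 - prefProb (κ y) x) ^ K) :=
    sum_congr rfl fun y hy => by rw [(mem_filter.1 hy).2]
  rw [hfiber, prefProb_eq_sum_filter hi q x]
  refine sum_mul_one_sub_one_sub_pow_le _ (fun y _ => hq0 y)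
    (fun y _ => prefProb_nonneg (hκ0 y) x) (fun y _ => prefProb_le_one (hκ0 y) (hκ1 y) x) ?_ K
  rw [← hmix x]
  exact sum_le_univ_sum_of_nonneg fun y => mul_nonneg (hq0 y) (prefProb_nonneg (hκ0 y) x)

end CondIIDCoupling

theorem expected_acceptance_length_le_bound_general
    {Ω : Type*} [Fintype Ω] {L K : ℕ} (hK : 1 ≤ K)
    (p q : (Fin L → Ω) → ℝ)
    (hp1 : ∑ s : Fin L → Ω, p s = 1)
    (hq0 : ∀ s, 0 ≤ q s)
    (π : (Fin K → Fin L → Ω) × (Fin L → Ω) → ℝ)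
    (hπ : IsCondIIDCoupling p q π) :
    (∑ z : (Fin K → Fin L → Ω) × (Fin L → Ω), π z * (accLen z.1 z.2 : ℝ))
      ≤ Bound p q K := by
  obtain ⟨⟨-, hmargX, -⟩, κ, hκ0, hκ1, hrep⟩ := hπ
  rw [sum_mul_accLen_eq_sum_range, Bound]
  refine sum_le_sum fun i hi => ?_
  have hiL : i < L := mem_range.1 hi
  rw [sum_mul_ite_lt_accLen_eq hiL hκ1 hrep]
  exact sum_mul_one_sub_one_sub_prefProb_pow_le hiL hq0 hκ0 hκ1
    (sum_mul_prefProb_kernel_eq_prefProb hK hp1 hmargX hκ1 hrep)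

/-- Lemma 5.1: upper bound on the expected acceptance length for every
conditionally i.i.d. coupling of `p^{⊗K}` and `q`. -/
theorem expected_acceptance_length_le_bound
    {Ω : Type*} [Fintype Ω] [Nonempty Ω] {L K : ℕ} (hL : 1 ≤ L) (hK : 1 ≤ K)
    (p q : (Fin L → Ω) → ℝ)
    (hp0 : ∀ s, 0 ≤ p s) (hp1 : ∑ s : Fin L → Ω, p s = 1)
    (hq0 : ∀ s, 0 ≤ q s) (hq1 : ∑ s : Fin L → Ω, q s = 1)
    (π : (Fin K → Fin L → Ω) × (Fin L → Ω) → ℝ)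
    (hπ : IsCondIIDCoupling p q π) :
    (∑ z : (Fin K → Fin L → Ω) × (Fin L → Ω), π z * (accLen z.1 z.2 : ℝ))
      ≤ Bound p q K :=
  expected_acceptance_length_le_bound_general hK p q hp1 hq0 π hπ
end
end

section
/- Validity of the block acceptance probability h_{Lk} (Eq. (2) defines a number in [0,1]): For all real numbers P, Q with 0 ≤ P ≤ 1 and 0 < Q ≤ 1, and every integer K ≥ 1, one has Q·[1 − (1 − min{P/Q, 1})^K] ≤ 1 − (1 − P)^K; in particular, if moreover P > 0, then the quantity h := Q·[1 − (1 − min{P/Q, 1})^K] / [1 − (1 − P)^K] lies in [0, 1]. -/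
/-! With `m = min (P/Q) 1` one has `Q m = min P Q ≤ P`. Writing `1 - Q m` as the convex
combination `Q (1 - m) + (1 - Q) · 1`, convexity of `x ↦ x ^ K` on `[0, ∞)` gives
`(1 - Q m) ^ K ≤ Q (1 - m) ^ K + (1 - Q)`, i.e. `Q (1 - (1 - m) ^ K) ≤ 1 - (1 - Q m) ^ K`,
and monotonicity of `x ↦ x ^ K` replaces `1 - Q m` by the smaller `1 - P ≥ 0`. -/

theorem pow_convex_comb_one_le {w x : ℝ} (hw0 : 0 ≤ w) (hw1 : w ≤ 1) (hx : 0 ≤ x) (K : ℕ) :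
    (w * x + (1 - w)) ^ K ≤ w * x ^ K + (1 - w) := by
  simpa using (convexOn_pow K).2 (Set.mem_Ici.mpr hx) (Set.mem_Ici.mpr zero_le_one)
    hw0 (sub_nonneg.mpr hw1) (add_sub_cancel w 1)

theorem mul_one_sub_one_sub_pow_le {w m : ℝ} (hw0 : 0 ≤ w) (hw1 : w ≤ 1) (hm : m ≤ 1)
    (K : ℕ) : w * (1 - (1 - m) ^ K) ≤ 1 - (1 - w * m) ^ K := by
  have h := pow_convex_comb_one_le hw0 hw1 (sub_nonneg.mpr hm) K
  rw [show w * (1 - m) + (1 - w) = 1 - w * m by ring] at h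
  linarith

theorem mul_min_div_one_eq {P Q : ℝ} (hQ : 0 < Q) : Q * min (P / Q) 1 = min P Q := by
  rw [mul_min_of_nonneg _ _ hQ.le, mul_div_cancel₀ _ hQ.ne', mul_one]

theorem hLk_valid_general (P Q : ℝ) (hP1 : P ≤ 1) (hQ0 : 0 < Q) (hQ1 : Q ≤ 1)
    (K : ℕ) (hK : 1 ≤ K) :
    Q * (1 - (1 - min (P / Q) 1) ^ K) ≤ 1 - (1 - P) ^ K ∧
    (0 < P →
      0 ≤ Q * (1 - (1 - min (P / Q) 1) ^ K) / (1 - (1 - P) ^ K) ∧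
      Q * (1 - (1 - min (P / Q) 1) ^ K) / (1 - (1 - P) ^ K) ≤ 1) := by
  set m := min (P / Q) 1
  have hm1 : m ≤ 1 := min_le_right _ _
  have hQm : Q * m ≤ P := (mul_min_div_one_eq hQ0).trans_le (min_le_left P Q)
  have hle : Q * (1 - (1 - m) ^ K) ≤ 1 - (1 - P) ^ K := by
    have hpow : (1 - P) ^ K ≤ (1 - Q * m) ^ K :=
      pow_le_pow_left₀ (sub_nonneg.mpr hP1) (by linarith) K
    linarith [mul_one_sub_one_sub_pow_le hQ0.le hQ1 hm1 K]
  refine ⟨hle, fun hP => ?_⟩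
  have hden : 0 < 1 - (1 - P) ^ K :=
    sub_pos.mpr (pow_lt_one₀ (by linarith) (by linarith) (by omega))
  have hm0 : 0 ≤ m := le_min (div_nonneg hP.le hQ0.le) zero_le_one
  have hnum : 0 ≤ Q * (1 - (1 - m) ^ K) :=
    mul_nonneg hQ0.le (sub_nonneg.mpr (pow_le_one₀ (sub_nonneg.mpr hm1) (by linarith)))
  exact ⟨div_nonneg hnum hden.le, (div_le_one hden).mpr hle⟩

/-- Validity of the block acceptance probability `h_{Lk}` of Eq. (2): for
`0 ≤ P ≤ 1`, `0 < Q ≤ 1` and `K ≥ 1` one has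
`Q·[1 − (1 − min{P/Q, 1})^K] ≤ 1 − (1 − P)^K`; in particular if `P > 0` then
`h := Q·[1 − (1 − min{P/Q, 1})^K] / [1 − (1 − P)^K] ∈ [0, 1]`. -/
theorem hLk_valid (P Q : ℝ) (hP0 : 0 ≤ P) (hP1 : P ≤ 1) (hQ0 : 0 < Q) (hQ1 : Q ≤ 1)
    (K : ℕ) (hK : 1 ≤ K) :
    Q * (1 - (1 - min (P / Q) 1) ^ K) ≤ 1 - (1 - P) ^ K ∧
    (0 < P →
      0 ≤ Q * (1 - (1 - min (P / Q) 1) ^ K) / (1 - (1 - P) ^ K) ∧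
      Q * (1 - (1 - min (P / Q) 1) ^ K) / (1 - (1 - P) ^ K) ≤ 1) :=
  hLk_valid_general P Q hP1 hQ0 hQ1 K hK
end

section
/- Jensen-type inequality ensuring nonnegativity of the sub-block acceptance probability h_{ik} (Eq. (1)): Let T be a finite index set, let (p_t)_{t∈T} and (q_t)_{t∈T} be nonnegative reals, set P := Σ_{t∈T} p_t and Q := Σ_{t∈T} q_t, and assume Q > 0. Then for every integer K ≥ 1, Σ_{t∈T} q_t·(1 − min{p_t/q_t, 1})^K ≥ Q·(1 − min{P/Q, 1})^K, where a summand with q_t = 0 is taken to be 0. -/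
/-! The map `x ↦ (1 - min x 1) ^ K` is convex, being a power of the nonnegative convex function
`x ↦ (1 - x)⁺`, and antitone. Jensen's inequality with weights `q_t` at the points `p_t / q_t`
bounds the right-hand side below by `Q` times its value at `(∑ q_t (p_t / q_t)) / Q`; this mean is
at most `P / Q` (the terms with `q_t = 0` drop out, the others give `p_t`), so antitonicity
finishes the proof. -/

open Finset Set

theorem convexOn_one_sub_min_one_pow (K : ℕ) :
    ConvexOn ℝ univ (fun x : ℝ => (1 - min x 1) ^ K) :=
  ((convexOn_const 1 convex_univ).sub
      ((concaveOn_id convex_univ).inf (concaveOn_const 1 convex_univ))).pow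
    (fun x _ => sub_nonneg.2 (min_le_right x 1)) K

theorem antitone_one_sub_min_one_pow (K : ℕ) :
    Antitone (fun x : ℝ => (1 - min x 1) ^ K) := fun _ y hxy =>
  pow_le_pow_left₀ (sub_nonneg.2 (min_le_right y 1)) (sub_le_sub_left (min_le_min_right 1 hxy) 1) K

theorem ConvexOn.sum_mul_map_div_le {ι : Type*} {D : Set ℝ} {f : ℝ → ℝ} (hf : ConvexOn ℝ D f)
    (s : Finset ι) {w x : ι → ℝ} (hw : ∀ i ∈ s, 0 ≤ w i) (hW : 0 < ∑ i ∈ s, w i)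
    (hx : ∀ i ∈ s, x i ∈ D) :
    (∑ i ∈ s, w i) * f ((∑ i ∈ s, w i * x i) / ∑ i ∈ s, w i) ≤ ∑ i ∈ s, w i * f (x i) := by
  have jensen := hf.map_centerMass_le hw hW hx
  simp only [centerMass, smul_eq_mul, Function.comp_apply] at jensen
  rwa [inv_mul_eq_div, inv_mul_eq_div, le_div_iff₀' hW] at jensen

theorem mul_div_le_of_nonneg {a b : ℝ} (ha : 0 ≤ a) (hb : 0 ≤ b) : b * (a / b) ≤ a := by
  rcases hb.eq_or_lt with rfl | hb
  · simpa using ha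
  · rw [mul_div_cancel₀ a hb.ne']

theorem hik_numerator_nonneg_general {T : Type*} [Fintype T] (p q : T → ℝ)
    (hp : ∀ t, 0 ≤ p t) (hq : ∀ t, 0 ≤ q t)
    (hQ : 0 < ∑ t, q t) (K : ℕ) :
    (∑ t, q t) * (1 - min ((∑ t, p t) / (∑ t, q t)) 1) ^ K
      ≤ ∑ t, q t * (1 - min (p t / q t) 1) ^ K := by
  have mean_le : (∑ t, q t * (p t / q t)) / ∑ t, q t ≤ (∑ t, p t) / ∑ t, q t := by
    gcongr with t
    exact mul_div_le_of_nonneg (hp t) (hq t)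
  calc (∑ t, q t) * (1 - min ((∑ t, p t) / (∑ t, q t)) 1) ^ K
      ≤ (∑ t, q t) * (1 - min ((∑ t, q t * (p t / q t)) / ∑ t, q t) 1) ^ K := by
        gcongr ?_ * ?_
        exact antitone_one_sub_min_one_pow K mean_le
    _ ≤ ∑ t, q t * (1 - min (p t / q t) 1) ^ K :=
        (convexOn_one_sub_min_one_pow K).sum_mul_map_div_le univ (fun t _ => hq t) hQ
          (fun t _ => mem_univ _)

/-- Jensen-type inequality ensuring nonnegativity of the numerator of the
sub-block acceptance probability `h_{ik}` of Eq. (1):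
`Σ_t q_t·(1 − min{p_t/q_t, 1})^K ≥ Q·(1 − min{P/Q, 1})^K` where `P = Σ_t p_t`,
`Q = Σ_t q_t > 0` (summands with `q_t = 0` are `0`). -/
theorem hik_numerator_nonneg {T : Type*} [Fintype T] (p q : T → ℝ)
    (hp : ∀ t, 0 ≤ p t) (hq : ∀ t, 0 ≤ q t)
    (hQ : 0 < ∑ t, q t) (K : ℕ) (hK : 1 ≤ K) :
    (∑ t, q t) * (1 - min ((∑ t, p t) / (∑ t, q t)) 1) ^ K
      ≤ ∑ t, q t * (1 - min (p t / q t) 1) ^ K :=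
  hik_numerator_nonneg_general p q hp hq hQ K
end

section
/- Distribution preservation of the SpecTr-GBV single-iteration output (Theorem 4.2, closed form): For s ∈ Ω^L write s^j for its length-j prefix, S_j(s) := Σ_{x∈Ω} w(s^j·x), and T_i(s) := Π_{j=i}^{L−1} [ w(s^{j+1}) / S_j(s) ], with the convention that a product containing a factor with zero denominator equals 0 and the empty product equals 1. Define μ(s) := α(s) + Σ_{i=0}^{L−1} ( S_i(s) − w(s^i) )·T_i(s). Then μ(s) = q(s) for every s ∈ Ω^L; in particular μ is a probability mass function on Ω^L equal to the target block distribution q. -/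
attribute [local instance] Classical.propDecidable

noncomputable section

/-- `p(s^i)`: mass under the block distribution `p` of the length-`i` prefix `s^i`
of `s` (for `i ≤ L`). -/
def prefMass {Ω : Type*} [Fintype Ω] {L : ℕ} (p : (Fin L → Ω) → ℝ)
    (s : Fin L → Ω) (i : ℕ) : ℝ :=
  ∑ t : Fin L → Ω, if (∀ j : Fin L, (j : ℕ) < i → t j = s j) then p t else 0

/-- `p(s^i·a)`: mass under `p` of the length-`(i+1)` string obtained by appending
the token `a` to the length-`i` prefix `s^i` of `s` (for `i < L`). -/
def extMass {Ω : Type*} [Fintype Ω] {L : ℕ} (p : (Fin L → Ω) → ℝ)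
    (s : Fin L → Ω) (i : ℕ) (a : Ω) : ℝ :=
  ∑ t : Fin L → Ω,
    if ((∀ j : Fin L, (j : ℕ) < i → t j = s j) ∧ ∀ h : i < L, t ⟨i, h⟩ = a) then p t
    else 0

/-- `w(s^i) := q(s^i)·(1 − min{p(s^i)/q(s^i), 1})^K` (equal to `0` when `q(s^i) = 0`). -/
def wM {Ω : Type*} [Fintype Ω] {L : ℕ} (p q : (Fin L → Ω) → ℝ) (K : ℕ)
    (s : Fin L → Ω) (i : ℕ) : ℝ :=
  prefMass q s i * (1 - min (prefMass p s i / prefMass q s i) 1) ^ K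

/-- `w(s^i·a)`, i.e. `w` of the one-token extension of the prefix `s^i` by `a`. -/
def wE {Ω : Type*} [Fintype Ω] {L : ℕ} (p q : (Fin L → Ω) → ℝ) (K : ℕ)
    (s : Fin L → Ω) (i : ℕ) (a : Ω) : ℝ :=
  extMass q s i a * (1 - min (extMass p s i a / extMass q s i a) 1) ^ K

/-- `S_i(s) := Σ_{a∈Ω} w(s^i·a)`. -/
def SS {Ω : Type*} [Fintype Ω] {L : ℕ} (p q : (Fin L → Ω) → ℝ) (K : ℕ)
    (s : Fin L → Ω) (i : ℕ) : ℝ :=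
  ∑ a : Ω, wE p q K s i a

/-- `T_i(s) := Π_{j=i}^{L−1} w(s^{j+1}) / S_j(s)` (in `ℝ`, division by zero is
zero, so a factor with zero denominator makes the product `0`, and the empty
product is `1`, matching the stated conventions). -/
def TT {Ω : Type*} [Fintype Ω] {L : ℕ} (p q : (Fin L → Ω) → ℝ) (K : ℕ)
    (s : Fin L → Ω) (i : ℕ) : ℝ :=
  ∏ j ∈ Finset.Ico i L, (wM p q K s (j + 1) / SS p q K s j)

/-- The law `μ` of the concatenated single-iteration output of SpecTr-GBV:
`μ(s) := α(s) + Σ_{i=0}^{L−1} (S_i(s) − w(s^i))·T_i(s)` with `α(s) = q(s) − w(s^L)`. -/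
def muGBV {Ω : Type*} [Fintype Ω] {L : ℕ} (p q : (Fin L → Ω) → ℝ) (K : ℕ)
    (s : Fin L → Ω) : ℝ :=
  (q s - wM p q K s L) +
    ∑ i ∈ Finset.range L, (SS p q K s i - wM p q K s i) * TT p q K s i


/-!
Write `w_i := w(s^i)`. Since `T_i = (w_{i+1}/S_i)·T_{i+1}`, each summand `(S_i − w_i)·T_i` equals
`w_{i+1}·T_{i+1} − w_i·T_i`; the division by `S_i` is harmless because `w_{i+1}` is one of the
nonnegative summands of `S_i`. The sum therefore telescopes to `w_L·T_L − w_0·T_0 = w_L`, using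
`T_L = 1` and `w_0 = 0` (the empty prefix has mass `1` under both `p` and `q`). Hence
`μ(s) = q(s) − w_L + w_L = q(s)`.
-/

open Finset

theorem sum_range_sub_mul_prod_Ico_div (w S : ℕ → ℝ) (L : ℕ)
    (hS : ∀ i < L, S i = 0 → w (i + 1) = 0) :
    ∑ i ∈ range L, (S i - w i) * ∏ j ∈ Ico i L, w (j + 1) / S j
      = w L - w 0 * ∏ j ∈ range L, w (j + 1) / S j := by
  set T : ℕ → ℝ := fun i => ∏ j ∈ Ico i L, w (j + 1) / S j
  have hstep : ∀ i ∈ range L, (S i - w i) * T i = w (i + 1) * T (i + 1) - w i * T i := by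
    intro i hi
    have hiL : i < L := mem_range.mp hi
    have hT : T i = w (i + 1) / S i * T (i + 1) := prod_eq_prod_Ico_succ_bot hiL _
    by_cases h0 : S i = 0
    · rw [hT, h0, hS i hiL h0]
      simp
    · rw [hT]
      field_simp
  have hTL : T L = 1 := by simp [T]
  rw [sum_congr rfl hstep, sum_range_sub (fun i => w i * T i), hTL, mul_one, range_eq_Ico]

section SpecTr

variable {Ω : Type*} [Fintype Ω] {L : ℕ}

theorem prefMass_zero (p : (Fin L → Ω) → ℝ) (s : Fin L → Ω) :
    prefMass p s 0 = ∑ t, p t :=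
  sum_congr rfl fun _ _ => if_pos fun _ hj => absurd hj (Nat.not_lt_zero _)

theorem prefMass_succ (p : (Fin L → Ω) → ℝ) (s : Fin L → Ω) {i : ℕ} (hi : i < L) :
    prefMass p s (i + 1) = extMass p s i (s ⟨i, hi⟩) := by
  refine sum_congr rfl fun t _ => if_congr ⟨fun H => ⟨?_, ?_⟩, fun ⟨H, Hi⟩ j hj => ?_⟩ rfl rfl
  · exact fun j hj => H j (Nat.lt_succ_of_lt hj)
  · exact fun _ => H ⟨i, hi⟩ (Nat.lt_succ_self i)
  · rcases Nat.lt_succ_iff_lt_or_eq.mp hj with hj | hj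
    · exact H j hj
    · obtain rfl : j = ⟨i, hi⟩ := Fin.ext hj
      exact Hi hi

variable (p q : (Fin L → Ω) → ℝ) (K : ℕ) (s : Fin L → Ω)

theorem wM_zero (hp : ∑ t, p t = 1) (hq : ∑ t, q t = 1) (hK : K ≠ 0) : wM p q K s 0 = 0 := by
  simp [wM, prefMass_zero, hp, hq, zero_pow hK]

theorem wM_succ {i : ℕ} (hi : i < L) : wM p q K s (i + 1) = wE p q K s i (s ⟨i, hi⟩) := by
  rw [wM, wE, prefMass_succ p s hi, prefMass_succ q s hi]

theorem wE_nonneg (hq : ∀ t, 0 ≤ q t) (i : ℕ) (a : Ω) : 0 ≤ wE p q K s i a := by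
  have hmass : 0 ≤ extMass q s i a := sum_nonneg fun t _ => by split <;> simp [hq]
  have hmin := min_le_right (extMass p s i a / extMass q s i a) 1
  exact mul_nonneg hmass (pow_nonneg (by linarith) K)

theorem wM_succ_eq_zero_of_SS_eq_zero (hq : ∀ t, 0 ≤ q t) {i : ℕ} (hi : i < L)
    (hS : SS p q K s i = 0) : wM p q K s (i + 1) = 0 := by
  rw [wM_succ p q K s hi]
  exact (sum_eq_zero_iff_of_nonneg fun a _ => wE_nonneg p q K s hq i a).mp hS _ (mem_univ _)

theorem muGBV_eq (hp : ∑ t, p t = 1) (hq0 : ∀ t, 0 ≤ q t) (hq1 : ∑ t, q t = 1) (hK : K ≠ 0) :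
    muGBV p q K s = q s := by
  rw [muGBV]
  simp only [TT]
  rw [sum_range_sub_mul_prod_Ico_div _ _ L
      fun i hi => wM_succ_eq_zero_of_SS_eq_zero p q K s hq0 hi,
    wM_zero p q K s hp hq1 hK]
  ring

end SpecTr

theorem muGBV_eq_target_general
    {Ω : Type*} [Fintype Ω] {L K : ℕ} (hK : 1 ≤ K)
    (p q : (Fin L → Ω) → ℝ)
    (hp1 : ∑ s : Fin L → Ω, p s = 1)
    (hq0 : ∀ s, 0 ≤ q s) (hq1 : ∑ s : Fin L → Ω, q s = 1) :
    (∀ s : Fin L → Ω, muGBV p q K s = q s) ∧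
    (∀ s : Fin L → Ω, 0 ≤ muGBV p q K s) ∧
    (∑ s : Fin L → Ω, muGBV p q K s) = 1 := by
  have hmu : ∀ s, muGBV p q K s = q s := fun s => muGBV_eq p q K s hp1 hq0 hq1 (by omega)
  exact ⟨hmu, fun s => hmu s ▸ hq0 s, by simp only [hmu, hq1]⟩

/-- Theorem 4.2 (distribution preservation, closed form): the single-iteration
output law `μ` of SpecTr-GBV equals the target block distribution `q`; in
particular `μ` is a probability mass function on `Ω^L`. -/
theorem muGBV_eq_target
    {Ω : Type*} [Fintype Ω] [Nonempty Ω] {L K : ℕ} (hL : 1 ≤ L) (hK : 1 ≤ K)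
    (p q : (Fin L → Ω) → ℝ)
    (hp0 : ∀ s, 0 ≤ p s) (hp1 : ∑ s : Fin L → Ω, p s = 1)
    (hq0 : ∀ s, 0 ≤ q s) (hq1 : ∑ s : Fin L → Ω, q s = 1) :
    (∀ s : Fin L → Ω, muGBV p q K s = q s) ∧
    (∀ s : Fin L → Ω, 0 ≤ muGBV p q K s) ∧
    (∑ s : Fin L → Ω, muGBV p q K s) = 1 :=
  muGBV_eq_target_general hK p q hp1 hq0 hq1
end
end
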